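/- arXiv:2106.04411 — 2 statements merged into one kernel-verified Lean document; each statement's English description precedes it below -/
import Mathlib

section
/- Let A and Y be nonempty finite index types, let w : A × Y → ℝ be nonnegative weights with ∑_{(a,y)} w(a,y) = 1, let p^T_y (y ∈ Y) and p^S_{a,y} ((a,y) ∈ A × Y) be probability measures on X, and define the mixture measures p^T = ∑_{(a,y)} w(a,y) · p^T_y and p^S = ∑_{(a,y)} w(a,y) · p^S_{a,y}. Assume every f ∈ F is integrable with respect to each of these measures, F is closed under negation (f ∈ F implies −f ∈ F), and for every pair of measures involved the set of integral differences over F is bounded above. Then ∑_{(a,y)} w(a,y) · D_F(p^T_y, p^S_{a,y})² ≥ D_F(p^T, p^S)². (Knowledge-distillation lemma: the weighted sum of squared per-group discrepancies to the teacher's class-conditional distributions upper-bounds the squared discrepancy between the overall teacher and student feature distributions.) -/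
open MeasureTheory

/-- The integral probability metric associated with a family `F` of functions:
`D_F(p,q) = sup_{f ∈ F} (∫ f dp − ∫ f dq)`, realized as a least upper bound in `ℝ`. -/
noncomputable def ipm {X : Type*} [MeasurableSpace X] (F : Set (X → ℝ))
    (p q : Measure X) : ℝ :=
  sSup {d : ℝ | ∃ f ∈ F, d = (∫ x, f x ∂p) - ∫ x, f x ∂q}

/-- Knowledge-distillation lemma (Lemma 1 of the paper) for general integral probability
metrics: the weighted sum of squared per-group discrepancies to the teacher's
class-conditional distributions upper-bounds the squared discrepancy between the overall
teacher and student feature distributions. -/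
theorem weighted_sum_sq_ipm_ge_sq_ipm_mixture
    {X : Type*} [MeasurableSpace X] (F : Set (X → ℝ))
    (hF_ne : F.Nonempty)
    (hF_meas : ∀ f ∈ F, Measurable f)
    (hF_neg : ∀ f ∈ F, (fun x => -f x) ∈ F)
    {A Y : Type*} [Fintype A] [Nonempty A] [Fintype Y] [Nonempty Y]
    (w : A × Y → ℝ) (hw : ∀ ay, 0 ≤ w ay) (hw1 : ∑ ay, w ay = 1)
    (pT : Y → Measure X) (pS : A × Y → Measure X)
    (hpT : ∀ y, IsProbabilityMeasure (pT y))
    (hpS : ∀ ay, IsProbabilityMeasure (pS ay))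
    (pTbar pSbar : Measure X)
    (hpTbar : pTbar = ∑ ay : A × Y, ENNReal.ofReal (w ay) • pT ay.2)
    (hpSbar : pSbar = ∑ ay : A × Y, ENNReal.ofReal (w ay) • pS ay)
    (hint : ∀ f ∈ F, (∀ y, Integrable f (pT y)) ∧ (∀ ay, Integrable f (pS ay)) ∧
      Integrable f pTbar ∧ Integrable f pSbar)
    (hbdd : ∀ ay : A × Y,
      BddAbove {d : ℝ | ∃ f ∈ F, d = (∫ x, f x ∂(pT ay.2)) - ∫ x, f x ∂(pS ay)})
    (hbdd' : BddAbove {d : ℝ | ∃ f ∈ F, d = (∫ x, f x ∂pTbar) - ∫ x, f x ∂pSbar}) :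
    ∑ ay : A × Y, w ay * (ipm F (pT ay.2) (pS ay)) ^ 2 ≥ (ipm F pTbar pSbar) ^ 2 := by
  -- Notation
  set D : A × Y → ℝ := fun ay => ipm F (pT ay.2) (pS ay) with hD
  set Dbar : ℝ := ipm F pTbar pSbar with hDbar
  -- the overall integrals decompose as weighted sums
  have key : ∀ f ∈ F, (∫ x, f x ∂pTbar) - ∫ x, f x ∂pSbar
      = ∑ ay : A × Y, w ay * ((∫ x, f x ∂(pT ay.2)) - ∫ x, f x ∂(pS ay)) := by
    intro f hf
    obtain ⟨h1, h2, _, _⟩ := hint f hf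
    have hT : (∫ x, f x ∂pTbar) = ∑ ay : A × Y, w ay * ∫ x, f x ∂(pT ay.2) := by
      rw [hpTbar, integral_finset_sum_measure (fun ay _ =>
        (h1 ay.2).smul_measure ENNReal.ofReal_ne_top)]
      refine Finset.sum_congr rfl fun ay _ => ?_
      rw [integral_smul_measure, ENNReal.toReal_ofReal (hw ay), smul_eq_mul]
    have hS : (∫ x, f x ∂pSbar) = ∑ ay : A × Y, w ay * ∫ x, f x ∂(pS ay) := by
      rw [hpSbar, integral_finset_sum_measure (fun ay _ =>
        (h2 ay).smul_measure ENNReal.ofReal_ne_top)]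
      refine Finset.sum_congr rfl fun ay _ => ?_
      rw [integral_smul_measure, ENNReal.toReal_ofReal (hw ay), smul_eq_mul]
    rw [hT, hS, ← Finset.sum_sub_distrib]
    refine Finset.sum_congr rfl fun ay _ => by ring
  -- nonnegativity of ipm when F is closed under negation
  have hipm_nonneg : ∀ (p q : Measure X),
      BddAbove {d : ℝ | ∃ f ∈ F, d = (∫ x, f x ∂p) - ∫ x, f x ∂q} →
      (∀ f ∈ F, Integrable f p ∧ Integrable f q) → 0 ≤ ipm F p q := by
    intro p q hb hi
    obtain ⟨f, hf⟩ := hF_ne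
    set d : ℝ := (∫ x, f x ∂p) - ∫ x, f x ∂q with hd
    have h1 : d ≤ ipm F p q := le_csSup hb ⟨f, hf, rfl⟩
    have h2 : -d ≤ ipm F p q := by
      refine le_csSup hb ⟨fun x => -f x, hF_neg f hf, ?_⟩
      rw [integral_neg, integral_neg]; ring
    rcases le_total 0 d with h | h
    · linarith
    · linarith
  have hDnonneg : ∀ ay, 0 ≤ D ay := fun ay =>
    hipm_nonneg _ _ (hbdd ay) (fun f hf => ⟨(hint f hf).1 ay.2, (hint f hf).2.1 ay⟩)
  have hDbar_nonneg : 0 ≤ Dbar :=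
    hipm_nonneg _ _ hbdd' (fun f hf => ⟨(hint f hf).2.2.1, (hint f hf).2.2.2⟩)
  -- Dbar ≤ ∑ w D
  have hle : Dbar ≤ ∑ ay : A × Y, w ay * D ay := by
    refine csSup_le ?_ ?_
    · obtain ⟨f, hf⟩ := hF_ne; exact ⟨_, f, hf, rfl⟩
    · rintro d ⟨f, hf, rfl⟩
      rw [key f hf]
      refine Finset.sum_le_sum fun ay _ => ?_
      exact mul_le_mul_of_nonneg_left (le_csSup (hbdd ay) ⟨f, hf, rfl⟩) (hw ay)
  -- Cauchy–Schwarz: (∑ w D)² ≤ (∑ w) (∑ w D²) = ∑ w D²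
  have hCS : (∑ ay : A × Y, w ay * D ay) ^ 2 ≤ ∑ ay : A × Y, w ay * D ay ^ 2 := by
    have := Finset.sum_mul_sq_le_sq_mul_sq Finset.univ
      (fun ay : A × Y => Real.sqrt (w ay)) (fun ay => Real.sqrt (w ay) * D ay)
    calc (∑ ay : A × Y, w ay * D ay) ^ 2
        = (∑ ay : A × Y, Real.sqrt (w ay) * (Real.sqrt (w ay) * D ay)) ^ 2 := by
          congr 1; refine Finset.sum_congr rfl fun ay _ => ?_
          rw [← mul_assoc, Real.mul_self_sqrt (hw ay)]
      _ ≤ (∑ ay : A × Y, Real.sqrt (w ay) ^ 2) * ∑ ay : A × Y, (Real.sqrt (w ay) * D ay) ^ 2 :=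
          this
      _ = ∑ ay : A × Y, w ay * D ay ^ 2 := by
          have h1 : (∑ ay : A × Y, Real.sqrt (w ay) ^ 2) = 1 := by
            rw [← hw1]; exact Finset.sum_congr rfl fun ay _ => Real.sq_sqrt (hw ay)
          rw [h1, one_mul]
          refine Finset.sum_congr rfl fun ay _ => ?_
          rw [mul_pow, Real.sq_sqrt (hw ay)]
  calc Dbar ^ 2 ≤ (∑ ay : A × Y, w ay * D ay) ^ 2 := by
        exact pow_le_pow_left₀ hDbar_nonneg hle 2
    _ ≤ ∑ ay : A × Y, w ay * D ay ^ 2 := hCS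
end

section
/- Let A and Y be nonempty finite index types, let w : A × Y → ℝ be nonnegative weights with ∑_{(a,y)} w(a,y) = 1, let p^T_y (y ∈ Y) and p^S_{a,y} ((a,y) ∈ A × Y) be probability measures on X with φ Bochner integrable with respect to each, and define the mixtures p^T = ∑_{(a,y)} w(a,y) · p^T_y and p^S = ∑_{(a,y)} w(a,y) · p^S_{a,y}. Then ∑_{(a,y)} w(a,y) · ‖μ(p^T_y) − μ(p^S_{a,y})‖² ≥ ‖μ(p^T) − μ(p^S)‖². (Knowledge-distillation lemma in kernel mean-embedding form.) -/
open MeasureTheory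

/-- Knowledge-distillation lemma in kernel mean-embedding form: the weighted sum of
squared MMDs (norms of differences of kernel mean embeddings `μ(p) = ∫ φ dp`) between the
teacher's class-conditional and the student's group-conditional feature distributions
upper-bounds the squared MMD between the mixture (overall) teacher and student
distributions. -/
theorem weighted_sum_sq_mmd_ge_sq_mmd_mixture
    {X : Type*} [MeasurableSpace X]
    {H : Type*} [NormedAddCommGroup H] [InnerProductSpace ℝ H] [CompleteSpace H]
    (φ : X → H)
    {A Y : Type*} [Fintype A] [Nonempty A] [Fintype Y] [Nonempty Y]
    (w : A × Y → ℝ) (hw : ∀ ay, 0 ≤ w ay) (hw1 : ∑ ay, w ay = 1)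
    (pT : Y → Measure X) (pS : A × Y → Measure X)
    (hpT : ∀ y, IsProbabilityMeasure (pT y))
    (hpS : ∀ ay, IsProbabilityMeasure (pS ay))
    (hφT : ∀ y, Integrable φ (pT y)) (hφS : ∀ ay, Integrable φ (pS ay)) :
    ∑ ay : A × Y, w ay * ‖(∫ x, φ x ∂(pT ay.2)) - ∫ x, φ x ∂(pS ay)‖ ^ 2 ≥
      ‖(∫ x, φ x ∂(∑ ay : A × Y, ENNReal.ofReal (w ay) • pT ay.2)) -
        ∫ x, φ x ∂(∑ ay : A × Y, ENNReal.ofReal (w ay) • pS ay)‖ ^ 2 := by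
  have hkey : ∀ (p : A × Y → Measure X), (∀ ay, Integrable φ (p ay)) →
      (∫ x, φ x ∂(∑ ay : A × Y, ENNReal.ofReal (w ay) • p ay)) =
        ∑ ay : A × Y, w ay • ∫ x, φ x ∂(p ay) := by
    intro p hp
    rw [integral_finset_sum_measure (fun ay _ => (hp ay).smul_measure ENNReal.ofReal_ne_top)]
    refine Finset.sum_congr rfl fun ay _ => ?_
    rw [integral_smul_measure, ENNReal.toReal_ofReal (hw ay)]
  rw [hkey (fun ay => pT ay.2) (fun ay => hφT ay.2), hkey pS hφS, ← Finset.sum_sub_distrib]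
  simp_rw [← smul_sub]
  calc ‖∑ ay : A × Y, w ay • ((∫ x, φ x ∂(pT ay.2)) - ∫ x, φ x ∂(pS ay))‖ ^ 2
      ≤ (∑ ay : A × Y, w ay * ‖(∫ x, φ x ∂(pT ay.2)) - ∫ x, φ x ∂(pS ay)‖) ^ 2 := by
        gcongr
        refine le_trans (norm_sum_le _ _) (le_of_eq ?_)
        refine Finset.sum_congr rfl fun ay _ => ?_
        rw [norm_smul, Real.norm_eq_abs, abs_of_nonneg (hw ay)]
    _ ≤ (∑ ay : A × Y, w ay) * ∑ ay : A × Y,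
          w ay * ‖(∫ x, φ x ∂(pT ay.2)) - ∫ x, φ x ∂(pS ay)‖ ^ 2 := by
        refine Finset.sum_sq_le_sum_mul_sum_of_sq_eq_mul _ (fun i _ => hw i)
          (fun i _ => mul_nonneg (hw i) (by positivity)) (fun i _ => by ring)
    _ = _ := by rw [hw1, one_mul]
end
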